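/- Let p ≥ 1 be an integer, let N be a p-rooted almost-binary phylogenetic network on X, and let {Z_1, ..., Z_d} be the maximal zig-zag trail decomposition of N. For any S ⊆ E(N), the induced subgraph N[S] is a minimal support network of N if and only if S ∩ E(Z_i) is a B-admissible subset of E(Z_i) for every i ∈ [1, d]. -/

import Mathlib

open Finset

variable {V : Type} [DecidableEq V] [Fintype V]

/-- The vertex set of the digraph given by the edge set `E`. -/
def verts (E : Finset (V × V)) : Finset V :=
  E.image Prod.fst ∪ E.image Prod.snd

/-- In-degree of `v` in the digraph with edge set `E`. -/
def indeg (E : Finset (V × V)) (v : V) : ℕ :=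
  (E.filter fun e => e.2 = v).card

/-- Out-degree of `v` in the digraph with edge set `E`. -/
def outdeg (E : Finset (V × V)) (v : V) : ℕ :=
  (E.filter fun e => e.1 = v).card

/-- `E` is (the edge set of) a `p`-rooted almost-binary phylogenetic network on `X`:
a finite simple DAG with exactly `p` in-degree-0 vertices, each of out-degree 1 or 2 (the roots),
whose set of in-degree-1, out-degree-0 vertices is `X` (the leaves), and all of whose other
vertices have in-degree and out-degree in `{1, 2}`. -/
structure IsPhyloNet (E : Finset (V × V)) (p : ℕ) (X : Finset V) : Prop where
  acyclic : ∀ v : V, ¬ Relation.TransGen (fun a b => (a, b) ∈ E) v v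
  roots_card : ((verts E).filter fun v => indeg E v = 0).card = p
  root_outdeg : ∀ v ∈ verts E, indeg E v = 0 → outdeg E v = 1 ∨ outdeg E v = 2
  leaves_eq : (verts E).filter (fun v => indeg E v = 1 ∧ outdeg E v = 0) = X
  internal_deg : ∀ v ∈ verts E, indeg E v ≠ 0 → v ∉ X →
    (indeg E v = 1 ∨ indeg E v = 2) ∧ (outdeg E v = 1 ∨ outdeg E v = 2)

/-- Two directed edges share a tail or share a head. -/
def Shares (e f : V × V) : Prop := e.1 = f.1 ∨ e.2 = f.2

/-- `S` is (the edge set of) a zig-zag trail of the digraph `E`: a subgraph with `m ≥ 1`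
edges which can be ordered so that consecutive edges share a head or share a tail. -/
def IsZigzagTrail (E S : Finset (V × V)) : Prop :=
  S ⊆ E ∧ ∃ l : List (V × V), l ≠ [] ∧ l.Nodup ∧ l.toFinset = S ∧ l.Chain' Shares

/-- A maximal zig-zag trail: one that is not a proper subgraph of another zig-zag trail. -/
def IsMaximalZigzagTrail (E S : Finset (V × V)) : Prop :=
  IsZigzagTrail E S ∧ ∀ S', IsZigzagTrail E S' → ¬ S ⊂ S'

/-- The `i`-th edge (0-indexed) of a zig-zag sequence on vertices `f 0, f 1, ...`;
when `down = true` the first edge descends (`f 0 > f 1`), and directions alternate. -/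
def zigEdge (f : ℕ → V) (down : Bool) (i : ℕ) : V × V :=
  if decide (i % 2 = 0) = down then (f i, f (i + 1)) else (f (i + 1), f i)

/-- `S` consists of the `m` distinct edges of the zig-zag sequence on `f 0, ..., f m`. -/
def IsZigzagShape (S : Finset (V × V)) (m : ℕ) (f : ℕ → V) (down : Bool) : Prop :=
  S = (Finset.range m).image (zigEdge f down) ∧
  ∀ i < m, ∀ j < m, zigEdge f down i = zigEdge f down j → i = j

/-- A crown: an even number `m` of edges written cyclically as `v₀ > v₁ < ⋯ < v_m = v₀`. -/
def IsCrown (S : Finset (V × V)) : Prop :=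
  ∃ m f, 1 ≤ m ∧ m % 2 = 0 ∧ f m = f 0 ∧ IsZigzagShape S m f true

/-- An M-fence: a non-crown with an even number `m` of edges,
of the form `v₀ < v₁ > ⋯ > v_m ≠ v₀`. -/
def IsMFence (S : Finset (V × V)) : Prop :=
  ¬ IsCrown S ∧ ∃ m f, 1 ≤ m ∧ m % 2 = 0 ∧ f m ≠ f 0 ∧ IsZigzagShape S m f false

/-- A W-fence: a non-crown with an even number `m` of edges,
of the form `v₀ > v₁ < ⋯ < v_m ≠ v₀`. -/
def IsWFence (S : Finset (V × V)) : Prop :=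
  ¬ IsCrown S ∧ ∃ m f, 1 ≤ m ∧ m % 2 = 0 ∧ f m ≠ f 0 ∧ IsZigzagShape S m f true

/-- An N-fence: a non-crown with an odd number `m` of edges,
of the form `v₀ > v₁ < ⋯ > v_m`. -/
def IsNFence (S : Finset (V × V)) : Prop :=
  ¬ IsCrown S ∧ ∃ m f, m % 2 = 1 ∧ IsZigzagShape S m f true

/-- A support network of `N = (V, E)`: a spanning subgraph that is itself a
`p`-rooted almost-binary phylogenetic network on `X` (identified with its edge set). -/
def IsSupportNet (E S : Finset (V × V)) (p : ℕ) (X : Finset V) : Prop :=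
  S ⊆ E ∧ verts S = verts E ∧ IsPhyloNet S p X

/-- A minimal support network: no support network is a proper subgraph of it. -/
def IsMinimalSupportNet (E S : Finset (V × V)) (p : ℕ) (X : Finset V) : Prop :=
  IsSupportNet E S p X ∧ ∀ S', IsSupportNet E S' p X → ¬ S' ⊂ S

/-- A minimum support network: one with the fewest edges among all support networks. -/
def IsMinimumSupportNet (E S : Finset (V × V)) (p : ℕ) (X : Finset V) : Prop :=
  IsSupportNet E S p X ∧ ∀ S', IsSupportNet E S' p X → S.card ≤ S'.card

/-- `S ⊆ Z` is A-admissible (degrees taken in the ambient network `E`):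
(C1) `S` contains every edge `(u,v)` of `Z` with `outdeg u = 1` or `indeg v = 1`;
(C2) of any two distinct edges of `Z` sharing a tail or a head, `S` contains at least one. -/
def AAdmissible (E Z S : Finset (V × V)) : Prop :=
  S ⊆ Z ∧
  (∀ e ∈ Z, (outdeg E e.1 = 1 ∨ indeg E e.2 = 1) → e ∈ S) ∧
  (∀ e₁ ∈ Z, ∀ e₂ ∈ Z, e₁ ≠ e₂ → Shares e₁ e₂ → e₁ ∈ S ∨ e₂ ∈ S)

/-- A B-admissible subset: an A-admissible subset none of whose proper subsets
is A-admissible. -/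
def BAdmissible (E Z S : Finset (V × V)) : Prop :=
  AAdmissible E Z S ∧ ∀ S', S' ⊂ S → ¬ AAdmissible E Z S'

/-- A C-admissible subset: an A-admissible subset of minimum cardinality. -/
def CAdmissible (E Z S : Finset (V × V)) : Prop :=
  AAdmissible E Z S ∧ ∀ S', AAdmissible E Z S' → S.card ≤ S'.card

/-- One subdivision step: an edge `(u, v)` is replaced by `(u, w), (w, v)` for a fresh
vertex `w`. -/
def SubdivStep (T T' : Finset (V × V)) : Prop :=
  ∃ u w v, (u, v) ∈ T ∧ w ∉ verts T ∧
    T' = insert (u, w) (insert (w, v) (T.erase (u, v)))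

/-- `S` is a subdivision of `T` (zero or more subdivision steps). -/
def IsSubdivisionOf (S T : Finset (V × V)) : Prop :=
  Relation.ReflTransGen SubdivStep T S

/-- A rooted binary phylogenetic tree on `X`: a 1-rooted network on `X` in which every
non-root, non-leaf vertex has in-degree 1 and out-degree 2. -/
def IsBinaryPhyloTree (T : Finset (V × V)) (X : Finset V) : Prop :=
  IsPhyloNet T 1 X ∧
  ∀ v ∈ verts T, indeg T v ≠ 0 → v ∉ X → indeg T v = 1 ∧ outdeg T v = 2

/-- `N = (V, E)` is tree-based: it has a support tree, i.e. a spanning subgraph that is a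
subdivision of some rooted binary phylogenetic tree on `X`. -/
def IsTreeBased (E : Finset (V × V)) (X : Finset V) : Prop :=
  ∃ S T, S ⊆ E ∧ verts S = verts E ∧ IsBinaryPhyloTree T X ∧ IsSubdivisionOf S T

/-- The underlying undirected simple graph of the digraph with edge set `S`. -/
def usym (S : Finset (V × V)) : SimpleGraph V where
  Adj u v := u ≠ v ∧ ((u, v) ∈ S ∨ (v, u) ∈ S)
  symm := ⟨fun _ _ h => ⟨h.1.symm, h.2.symm⟩⟩
  loopless := ⟨fun _ h => h.1 rfl⟩

/-- Two edges of `S` lie in a common block of the underlying undirected graph: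
they are equal or lie on a common cycle. -/
def SameBlock (S : Finset (V × V)) (e f : V × V) : Prop :=
  e = f ∨ ∃ (a : V) (w : (usym S).Walk a a), w.IsCycle ∧
    s(e.1, e.2) ∈ w.edges ∧ s(f.1, f.2) ∈ w.edges

/-- The number of reticulations (in-degree-2 vertices) contained in the block of the
edge `e` of `S`. -/
noncomputable def blockReticCount (S : Finset (V × V)) (e : V × V) : ℕ :=
  Set.ncard {v : V | indeg S v = 2 ∧ ∃ f ∈ S, SameBlock S e f ∧ (f.1 = v ∨ f.2 = v)}

/-- The level of the network with edge set `S`: the maximum number of reticulations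
contained in a block. -/
noncomputable def level (S : Finset (V × V)) : ℕ :=
  S.sup (blockReticCount S)

/-!
`N[S]` is a support network exactly when `S` keeps an in-edge at every non-root vertex and an
out-edge at every non-leaf vertex: deleting edges can only create roots, and the number of roots
is fixed. As all in- and out-degrees are at most 2, this is the edgewise condition (C1) + (C2)
on `E(N)`. Two edges sharing a head or a tail lie in the same maximal zig-zag trail: otherwise the
trail could be extended, or an interior edge of it would share endpoints with three other edges.
Hence being a support network is a conjunction of independent conditions on the parts
`S ∩ E(Zᵢ)`, and minimality of `S` splits into minimality of each part.
-/

section Minimal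

variable {ι α : Type*} [Fintype ι] [DecidableEq α]

theorem minimal_iff_forall_minimal_inter {E : Finset α} {Z : ι → Finset α}
    (hdisj : ∀ i j, i ≠ j → Disjoint (Z i) (Z j)) (hcover : Finset.univ.biUnion Z = E)
    {P : Finset α → Prop} {Q : ι → Finset α → Prop}
    (hPQ : ∀ S ⊆ E, P S ↔ ∀ i, Q i (S ∩ Z i)) {S : Finset α} (hS : S ⊆ E) :
    Minimal P S ↔ ∀ i, Minimal (Q i) (S ∩ Z i) := by
  simp only [minimal_iff_forall_lt, hPQ S hS]
  constructor
  · rintro ⟨hQ, hmin⟩ i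
    refine ⟨hQ i, fun T hT hQT => ?_⟩
    have hTZ : T ⊆ Z i := hT.le.trans inter_subset_right
    have hQ' : ∀ j, Q j ((S \ Z i ∪ T) ∩ Z j) := by
      intro j
      obtain rfl | hji := eq_or_ne j i
      · rwa [union_inter_distrib_right, sdiff_inter_self, empty_union, inter_eq_left.2 hTZ]
      · have hji' := disjoint_left.1 (hdisj j i hji)
        suffices (S \ Z i ∪ T) ∩ Z j = S ∩ Z j from this ▸ hQ j
        ext x
        simp only [mem_inter, mem_union, mem_sdiff]
        exact ⟨fun h => ⟨h.1.elim And.left fun hx => (mem_inter.1 (hT.le hx)).1, h.2⟩,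
          fun h => ⟨.inl ⟨h.1, hji' h.2⟩, h.2⟩⟩
    obtain ⟨x, hxS, hxT⟩ := exists_of_ssubset hT
    have hlt : S \ Z i ∪ T < S := by
      refine ssubset_of_subset_of_ne (union_subset sdiff_subset (hT.le.trans inter_subset_left)) ?_
      rintro h
      rw [← h, mem_inter, mem_union, mem_sdiff] at hxS
      tauto
    exact hmin hlt ((hPQ _ (hlt.le.trans hS)).2 hQ')
  · intro hmin
    refine ⟨fun i => (hmin i).1, fun S' hlt hPS' => ?_⟩
    obtain ⟨x, hxS, hxS'⟩ := exists_of_ssubset hlt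
    obtain ⟨i, -, hxZ⟩ := mem_biUnion.1 (hcover ▸ hS hxS)
    have hlt_i : S' ∩ Z i < S ∩ Z i := by
      refine Finset.ssubset_iff_subset_ne.2 ⟨inter_subset_inter_right hlt.le, fun h => ?_⟩
      exact hxS' (mem_inter.1 (h ▸ mem_inter.2 ⟨hxS, hxZ⟩)).1
    exact (hmin i).2 hlt_i ((hPQ S' (hlt.le.trans hS)).1 hPS' i)

end Minimal

section Network

variable {V : Type}

theorem Shares.symm {e f : V × V} (h : Shares e f) : Shares f e :=
  h.imp Eq.symm Eq.symm

variable [DecidableEq V] {E S : Finset (V × V)} {p : ℕ} {X : Finset V}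

theorem indeg_ne_zero_iff {v : V} : indeg E v ≠ 0 ↔ ∃ e ∈ E, e.2 = v :=
  card_ne_zero.trans filter_nonempty_iff

theorem outdeg_ne_zero_iff {v : V} : outdeg E v ≠ 0 ↔ ∃ e ∈ E, e.1 = v :=
  card_ne_zero.trans filter_nonempty_iff

theorem mem_verts_iff {v : V} : v ∈ verts E ↔ outdeg E v ≠ 0 ∨ indeg E v ≠ 0 := by
  simp [verts, outdeg_ne_zero_iff, indeg_ne_zero_iff]

theorem verts_mono (h : S ⊆ E) : verts S ⊆ verts E :=
  union_subset_union (image_subset_image h) (image_subset_image h)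

theorem indeg_mono (h : S ⊆ E) (v : V) : indeg S v ≤ indeg E v :=
  card_le_card (filter_subset_filter _ h)

theorem outdeg_mono (h : S ⊆ E) (v : V) : outdeg S v ≤ outdeg E v :=
  card_le_card (filter_subset_filter _ h)

def HasDegreesLeTwo (E : Finset (V × V)) : Prop :=
  ∀ v, indeg E v ≤ 2 ∧ outdeg E v ≤ 2

theorem IsPhyloNet.degrees_of_mem_leaves (hN : IsPhyloNet E p X) {v : V} (hv : v ∈ X) :
    indeg E v = 1 ∧ outdeg E v = 0 := by
  rw [← hN.leaves_eq, mem_filter] at hv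
  exact hv.2

theorem IsPhyloNet.hasDegreesLeTwo (hN : IsPhyloNet E p X) : HasDegreesLeTwo E := by
  intro v
  by_cases hv : v ∈ verts E
  · by_cases h0 : indeg E v = 0
    · have := hN.root_outdeg v hv h0; omega
    by_cases hX : v ∈ X
    · have := hN.degrees_of_mem_leaves hX; omega
    · have := hN.internal_deg v hv h0 hX; omega
  · rw [mem_verts_iff] at hv
    omega

def KeepsIncidence (E S : Finset (V × V)) : Prop :=
  ∀ v, (indeg E v ≠ 0 → indeg S v ≠ 0) ∧ (outdeg E v ≠ 0 → outdeg S v ≠ 0)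

theorem IsSupportNet.keepsIncidence (hN : IsPhyloNet E p X) (h : IsSupportNet E S p X) :
    KeepsIncidence E S := by
  obtain ⟨hSE, hverts, hSN⟩ := h
  have hroots : (verts E).filter (indeg E · = 0) = (verts S).filter (indeg S · = 0) := by
    refine eq_of_subset_of_card_le (fun v hv => ?_) (by rw [hSN.roots_card, hN.roots_card])
    rw [mem_filter] at hv ⊢
    exact ⟨hverts ▸ hv.1, Nat.le_zero.1 (hv.2 ▸ indeg_mono hSE v)⟩
  refine fun v => ⟨fun hE hS0 => ?_, fun hE => ?_⟩
  · have hv : v ∈ verts S := hverts ▸ mem_verts_iff.2 (.inr hE)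
    have hroot : v ∈ (verts E).filter (indeg E · = 0) := hroots ▸ mem_filter.2 ⟨hv, hS0⟩
    exact hE (mem_filter.1 hroot).2
  · have hv : v ∈ verts S := hverts ▸ mem_verts_iff.2 (.inl hE)
    have hvX : v ∉ X := fun hX => hE (hN.degrees_of_mem_leaves hX).2
    by_cases h0 : indeg S v = 0
    · have := hSN.root_outdeg v hv h0; omega
    · have := (hSN.internal_deg v hv h0 hvX).2; omega

theorem verts_eq_of_keepsIncidence (hSE : S ⊆ E) (h : KeepsIncidence E S) :
    verts S = verts E := by
  refine (verts_mono hSE).antisymm fun v hv => ?_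
  rw [mem_verts_iff] at hv ⊢
  exact hv.imp (h v).2 (h v).1

theorem IsPhyloNet.of_keepsIncidence (hN : IsPhyloNet E p X) (hSE : S ⊆ E)
    (h : KeepsIncidence E S) : IsPhyloNet S p X := by
  have hverts := verts_eq_of_keepsIncidence hSE h
  have hin : ∀ v, indeg S v = 0 ↔ indeg E v = 0 := fun v => by
    have := indeg_mono hSE v; have := (h v).1; omega
  have hout : ∀ v, outdeg S v = 0 ↔ outdeg E v = 0 := fun v => by
    have := outdeg_mono hSE v; have := (h v).2; omega
  refine ⟨fun v hv => hN.acyclic v (Relation.TransGen.mono (fun _ _ hab => hSE hab) v v hv), ?_,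
    fun v hv h0 => ?_, ?_, fun v hv h0 hX => ?_⟩
  · simpa only [hverts, hin] using hN.roots_card
  · have := hN.root_outdeg v (hverts ▸ hv) ((hin v).1 h0)
    have := outdeg_mono hSE v; have := hout v; omega
  · rw [← hN.leaves_eq, hverts]
    refine filter_congr fun v hv => ?_
    have := indeg_mono hSE v; have := hin v; have := hout v
    by_cases hX : v ∈ X
    · have := hN.degrees_of_mem_leaves hX; omega
    by_cases h0 : indeg E v = 0
    · omega
    · have := hN.internal_deg v hv h0 hX; omega
  · have := hN.internal_deg v (hverts ▸ hv) (mt (hin v).2 h0) hX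
    have := indeg_mono hSE v; have := outdeg_mono hSE v; have := hout v; omega

theorem isSupportNet_iff_keepsIncidence (hN : IsPhyloNet E p X) (hSE : S ⊆ E) :
    IsSupportNet E S p X ↔ KeepsIncidence E S :=
  ⟨IsSupportNet.keepsIncidence hN, fun h =>
    ⟨hSE, verts_eq_of_keepsIncidence hSE h, hN.of_keepsIncidence hSE h⟩⟩

theorem meets_nonempty_fibers_iff {π : V × V → V} (hπ : ∀ v, (E.filter (π · = v)).card ≤ 2)
    (hSE : S ⊆ E) :
    (∀ v, (E.filter (π · = v)).card ≠ 0 → (S.filter (π · = v)).card ≠ 0) ↔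
      (∀ e ∈ E, (E.filter (π · = π e)).card = 1 → e ∈ S) ∧
      (∀ e₁ ∈ E, ∀ e₂ ∈ E, e₁ ≠ e₂ → π e₁ = π e₂ → e₁ ∈ S ∨ e₂ ∈ S) := by
  simp only [card_ne_zero, filter_nonempty_iff]
  constructor
  · intro h
    refine ⟨fun e he h1 => ?_, fun e₁ he₁ e₂ he₂ hne hπe => ?_⟩
    · obtain ⟨g, hgS, hg⟩ := h (π e) ⟨e, he, rfl⟩
      obtain ⟨a, ha⟩ := card_eq_one.1 h1
      have hg' : g ∈ ({a} : Finset _) := ha ▸ mem_filter.2 ⟨hSE hgS, hg⟩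
      have he' : e ∈ ({a} : Finset _) := ha ▸ mem_filter.2 ⟨he, rfl⟩
      rwa [mem_singleton.1 he', ← mem_singleton.1 hg']
    · obtain ⟨g, hgS, hg⟩ := h (π e₁) ⟨e₁, he₁, rfl⟩
      have hpair : {e₁, e₂} = E.filter (π · = π e₁) := by
        refine eq_of_subset_of_card_le (insert_subset ?_ (singleton_subset_iff.2 ?_)) ?_
        · exact mem_filter.2 ⟨he₁, rfl⟩
        · exact mem_filter.2 ⟨he₂, hπe.symm⟩
        · rw [card_pair hne]; exact hπ _
      have hg' : g ∈ ({e₁, e₂} : Finset _) := hpair ▸ mem_filter.2 ⟨hSE hgS, hg⟩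
      rcases mem_insert.1 hg' with rfl | hg'
      · exact .inl hgS
      · exact .inr (mem_singleton.1 hg' ▸ hgS)
  · rintro ⟨h1, h2⟩ v ⟨e, he, rfl⟩
    have hpos : (E.filter (π · = π e)).card ≠ 0 := card_ne_zero.2 ⟨e, mem_filter.2 ⟨he, rfl⟩⟩
    obtain hc | hc : (E.filter (π · = π e)).card = 1 ∨ (E.filter (π · = π e)).card = 2 := by
      have := hπ (π e); omega
    · exact ⟨e, h1 e he hc, rfl⟩
    · obtain ⟨a, b, hab, hF⟩ := card_eq_two.1 hc
      have ha : a ∈ E.filter (π · = π e) := hF ▸ mem_insert_self a {b}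
      have hb : b ∈ E.filter (π · = π e) := hF ▸ mem_insert_of_mem (mem_singleton_self b)
      rw [mem_filter] at ha hb
      rcases h2 a ha.1 b hb.1 hab (ha.2.trans hb.2.symm) with h | h
      exacts [⟨a, h, ha.2⟩, ⟨b, h, hb.2⟩]

theorem keepsIncidence_iff_aAdmissible (hE : HasDegreesLeTwo E) (hSE : S ⊆ E) :
    KeepsIncidence E S ↔ AAdmissible E E S := by
  have hin := meets_nonempty_fibers_iff (π := Prod.snd) (fun v => (hE v).1) hSE
  have hout := meets_nonempty_fibers_iff (π := Prod.fst) (fun v => (hE v).2) hSE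
  simp only [KeepsIncidence, AAdmissible, Shares, hSE, true_and, or_imp, imp_and, forall_and]
  simp only [indeg, outdeg] at hin hout ⊢
  rw [hin, hout]
  tauto

instance : DecidableRel (Shares : V × V → V × V → Prop) := fun _ _ => instDecidableOr

theorem HasDegreesLeTwo.card_shares_le_two (hE : HasDegreesLeTwo E) {e : V × V} (he : e ∈ E) :
    ((E.erase e).filter (Shares e)).card ≤ 2 := by
  have hsub : (E.erase e).filter (Shares e) ⊆
      (E.filter (·.1 = e.1)).erase e ∪ (E.filter (·.2 = e.2)).erase e := by
    intro x
    simp only [mem_filter, mem_erase, mem_union, Shares]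
    tauto
  have hout := card_erase_of_mem (mem_filter.2 ⟨he, rfl⟩ : e ∈ E.filter (·.1 = e.1))
  have hin := card_erase_of_mem (mem_filter.2 ⟨he, rfl⟩ : e ∈ E.filter (·.2 = e.2))
  have := (hE e.1).2; have := (hE e.2).1
  simp only [indeg, outdeg] at *
  have := (card_le_card hsub).trans (card_union_le _ _)
  omega

theorem IsMaximalZigzagTrail.mem_of_shares (hE : HasDegreesLeTwo E) {Z : Finset (V × V)}
    (hZ : IsMaximalZigzagTrail E Z) {e f : V × V} (he : e ∈ Z) (hf : f ∈ E)
    (hsh : Shares e f) : f ∈ Z := by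
  by_contra hfZ
  obtain ⟨⟨hZE, l, -, hnd, rfl, hch⟩, hmax⟩ := hZ
  have hfl : f ∉ l := fun h => hfZ (List.mem_toFinset.2 h)
  have no_extension (l' : List (V × V)) (hnd' : l'.Nodup) (hl' : l'.toFinset = insert f l.toFinset)
      (hch' : l'.IsChain Shares) : False := by
    refine hmax _ ⟨insert_subset hf hZE, l', ?_, hnd', hl', hch'⟩ (ssubset_insert hfZ)
    rintro rfl
    exact insert_ne_empty _ _ hl'.symm
  obtain ⟨s, t, rfl⟩ := List.append_of_mem (List.mem_toFinset.1 he)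
  rcases List.eq_nil_or_concat s with rfl | ⟨s, g, rfl⟩
  · refine no_extension (f :: e :: t) (List.nodup_cons.2 ⟨hfl, hnd⟩) (by simp) ?_
    exact List.isChain_cons_cons.2 ⟨hsh.symm, hch⟩
  rcases t with _ | ⟨h, t⟩
  · refine no_extension (s.concat g ++ [e] ++ [f]) ?_ (by ext; simp; tauto) ?_
    · refine List.nodup_append.2 ⟨hnd, List.nodup_singleton f, ?_⟩
      rintro a ha b hb rfl
      exact hfl (List.mem_singleton.1 hb ▸ ha)
    · exact List.isChain_append.2 ⟨hch, List.isChain_singleton f, by simpa using hsh⟩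
  · -- `e` is interior: it shares endpoints with its trail neighbours `g`, `h` and with `f`
    obtain ⟨-, hch, hge⟩ := List.isChain_append.1 hch
    have hge : Shares g e := by simpa using hge
    have heh : Shares e h := (List.isChain_cons_cons.1 hch).1
    have hdist : g ≠ e ∧ g ≠ h ∧ e ≠ h := by simp [List.nodup_append] at hnd; tauto
    have hfdist : f ≠ e ∧ f ≠ g ∧ f ≠ h := by simp at hfl; tauto
    have hmem : g ∈ E ∧ h ∈ E := ⟨hZE (by simp), hZE (by simp)⟩
    have hsub : ({f, g, h} : Finset _) ⊆ (E.erase e).filter (Shares e) := by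
      simp only [insert_subset_iff, singleton_subset_iff, mem_filter, mem_erase]
      exact ⟨⟨⟨hfdist.1, hf⟩, hsh⟩, ⟨⟨hdist.1, hmem.1⟩, hge.symm⟩,
        ⟨⟨hdist.2.2.symm, hmem.2⟩, heh⟩⟩
    have hcard : ({f, g, h} : Finset _).card = 3 :=
      card_eq_three.2 ⟨f, g, h, hfdist.2.1, hfdist.2.2, hdist.2.1, rfl⟩
    have := hE.card_shares_le_two (hZE he)
    have := card_le_card hsub
    omega

theorem AAdmissible.inter_of_subset {Z Z' : Finset (V × V)} (h : AAdmissible E Z S)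
    (hZ' : Z' ⊆ Z) : AAdmissible E Z' (S ∩ Z') := by
  refine ⟨inter_subset_right, fun e he hd => mem_inter.2 ⟨h.2.1 e (hZ' he) hd, he⟩,
    fun e₁ h₁ e₂ h₂ hne hsh => ?_⟩
  exact (h.2.2 e₁ (hZ' h₁) e₂ (hZ' h₂) hne hsh).imp (mem_inter.2 ⟨·, h₁⟩) (mem_inter.2 ⟨·, h₂⟩)

variable {ι : Type*} [Fintype ι] {Z : ι → Finset (V × V)}

theorem aAdmissible_self_iff_forall_aAdmissible_inter (hE : HasDegreesLeTwo E)
    (hmax : ∀ i, IsMaximalZigzagTrail E (Z i)) (hcover : univ.biUnion Z = E) (hSE : S ⊆ E) :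
    AAdmissible E E S ↔ ∀ i, AAdmissible E (Z i) (S ∩ Z i) := by
  refine ⟨fun h i => h.inter_of_subset (hmax i).1.1, fun h => ?_⟩
  have trail_of (e : V × V) (he : e ∈ E) : ∃ i, e ∈ Z i := by
    obtain ⟨i, -, hi⟩ := mem_biUnion.1 (hcover ▸ he)
    exact ⟨i, hi⟩
  refine ⟨hSE, fun e he hd => ?_, fun e₁ h₁ e₂ h₂ hne hsh => ?_⟩
  · obtain ⟨i, hi⟩ := trail_of e he
    exact (mem_inter.1 ((h i).2.1 e hi hd)).1
  · obtain ⟨i, hi⟩ := trail_of e₁ h₁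
    have h₂i := (hmax i).mem_of_shares hE hi h₂ hsh
    exact ((h i).2.2 e₁ hi e₂ h₂i hne hsh).imp (mem_inter.1 · |>.1) (mem_inter.1 · |>.1)

theorem isSupportNet_iff_forall_aAdmissible (hN : IsPhyloNet E p X)
    (hmax : ∀ i, IsMaximalZigzagTrail E (Z i)) (hcover : univ.biUnion Z = E) (hSE : S ⊆ E) :
    IsSupportNet E S p X ↔ ∀ i, AAdmissible E (Z i) (S ∩ Z i) :=
  (isSupportNet_iff_keepsIncidence hN hSE).trans <|
    (keepsIncidence_iff_aAdmissible hN.hasDegreesLeTwo hSE).trans <|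
      aAdmissible_self_iff_forall_aAdmissible_inter hN.hasDegreesLeTwo hmax hcover hSE

theorem isMinimalSupportNet_iff_minimal :
    IsMinimalSupportNet E S p X ↔ Minimal (IsSupportNet E · p X) S := by
  rw [minimal_iff_forall_lt]
  exact and_congr_right' ⟨fun h _ hlt hS' => h _ hS' hlt, fun h _ hS' hlt => h hlt hS'⟩

theorem bAdmissible_iff_minimal {Z : Finset (V × V)} :
    BAdmissible E Z S ↔ Minimal (AAdmissible E Z) S :=
  minimal_iff_forall_lt.symm

end Network

theorem stmt7_general (p : ℕ) (X : Finset V)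
    (E : Finset (V × V)) (hN : IsPhyloNet E p X)
    (d : ℕ) (Z : Fin d → Finset (V × V))
    (hmax : ∀ i, IsMaximalZigzagTrail E (Z i))
    (hdisj : ∀ i j, i ≠ j → Disjoint (Z i) (Z j))
    (hcover : Finset.univ.biUnion Z = E)
    (S : Finset (V × V)) (hS : S ⊆ E) :
    IsMinimalSupportNet E S p X ↔ ∀ i, BAdmissible E (Z i) (S ∩ Z i) := by
  simp only [isMinimalSupportNet_iff_minimal, bAdmissible_iff_minimal]
  exact minimal_iff_forall_minimal_inter hdisj hcover
    (fun _ hS' => isSupportNet_iff_forall_aAdmissible hN hmax hcover hS') hS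

/-- `N[S]` is a minimal support network of `N` iff `S ∩ E(Zᵢ)` is B-admissible in `E(Zᵢ)`
for every maximal zig-zag trail `Zᵢ` of the decomposition of `N`. -/
theorem stmt7 (p : ℕ) (hp : 1 ≤ p) (X : Finset V) (hX : X.Nonempty)
    (E : Finset (V × V)) (hN : IsPhyloNet E p X)
    (d : ℕ) (Z : Fin d → Finset (V × V))
    (hmax : ∀ i, IsMaximalZigzagTrail E (Z i))
    (hdisj : ∀ i j, i ≠ j → Disjoint (Z i) (Z j))
    (hcover : Finset.univ.biUnion Z = E)
    (S : Finset (V × V)) (hS : S ⊆ E) :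
    IsMinimalSupportNet E S p X ↔ ∀ i, BAdmissible E (Z i) (S ∩ Z i) :=
  stmt7_general p X E hN d Z hmax hdisj hcover S hS
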